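/- Suppose q = 1 (so that, by the standing assumption, K has characteristic 0). Let P = Σ_{j=0}^m p_j(M) D_1^j with m ≥ 0 and p_m ≠ 0, let α ∈ K be nonzero, let s ≥ 1, and fix a Jordan chain (Ψ_{α,r})_{r≥1} at α. Then P Ψ_{α,s} − (−1)^m · s(s+1)⋯(s+m−1) · p_m(α) · Ψ_{α,s+m} lies in the K-linear span of {Ψ_{α,r} : 1 ≤ r < s+m} (the product s(s+1)⋯(s+m−1) being 1 when m = 0). -/

import Mathlib

/-! Write `N = M - α` and `V_k = span {Ψ_r : 1 ≤ r < k}`. A Jordan chain satisfies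
`N Ψ_{r+1} = Ψ_r` and `N Ψ_1 = 0`, and for `α ≠ 0` the kernel of `N` is spanned by `Ψ_1`; hence
`N` maps `V_{k+1}` onto `V_k`, and `N x ∈ V_k` forces `x ∈ V_{k+1}` (for `k ≥ 1`).
Since `D_1 M - M D_1 = 1`, also `D_1 N - N D_1 = 1`, and applying `N` shows by induction that
`D_1 Ψ_s ≡ -s Ψ_{s+1}` modulo `V_{s+1}`, so `D_1^j Ψ_s ≡ (-1)^j s⋯(s+j-1) Ψ_{s+j}` modulo
`V_{s+j}`. Finally `p(M)` preserves every `V_k`, and `p(M) Ψ_s ≡ p(α) Ψ_s` modulo `V_s` because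
`X - α` divides `p - p(α)`: only the term `j = m` survives modulo `V_{s+m}`. -/

open Polynomial
open scoped Classical

noncomputable section

/-- The q-integer {n}_q. -/
def qInt (K : Type*) [Field K] (q : K) (n : ℤ) : K :=
  if q = 1 then (n : K) else (q ^ n - 1) / (q - 1)

/-- The multiplication operator `M` on formal Laurent series `L = ℤ → K`:
`(M a)(n) = a(n-1)`. -/
def Mop (K : Type*) [Field K] : Module.End K (ℤ → K) where
  toFun a := fun n => a (n - 1)
  map_add' _ _ := rfl
  map_smul' _ _ := rfl

/-- The q-difference operator `D_q` on `L = ℤ → K`: `(D_q a)(n) = {n+1}_q · a(n+1)`. -/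
def Dq (K : Type*) [Field K] (q : K) : Module.End K (ℤ → K) where
  toFun a := fun n => qInt K q (n + 1) * a (n + 1)
  map_add' x y := by funext n; simp [Pi.add_apply, mul_add]
  map_smul' c x := by funext n; simp [Pi.smul_apply, smul_eq_mul]; ring

/-- The element `Ψ_{α,1} ∈ L`, `Ψ_{α,1}(n) = α^{-n}`. -/
def Psi1 (K : Type*) [Field K] (α : K) : ℤ → K := fun n => α ^ (-n)

/-- A Jordan chain at `α`: a sequence `(Ψ_{α,s})_{s ≥ 1}` with first term `Ψ_{α,1}`
and `(M - α·id) Ψ_{α,s} = Ψ_{α,s-1}` for `s ≥ 2`. -/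
def IsJordanChain (K : Type*) [Field K] (α : K) (Ψ : ℕ → ℤ → K) : Prop :=
  Ψ 1 = Psi1 K α ∧ ∀ s : ℕ, 2 ≤ s → Mop K (Ψ s) - α • Ψ s = Ψ (s - 1)

open Finset Submodule

def chainSpan (K : Type*) {V : Type*} [CommRing K] [AddCommGroup V] [Module K V]
    (Ψ : ℕ → V) (k : ℕ) : Submodule K V :=
  span K (Ψ '' Set.Ico 1 k)

section chainSpan

variable {K V : Type*} [CommRing K] [AddCommGroup V] [Module K V] {Ψ : ℕ → V} {N : Module.End K V}

theorem mem_chainSpan {r k : ℕ} (h1 : 1 ≤ r) (h2 : r < k) : Ψ r ∈ chainSpan K Ψ k :=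
  subset_span ⟨r, ⟨h1, h2⟩, rfl⟩

theorem chainSpan_mono : Monotone (chainSpan K Ψ) := fun _ _ h =>
  span_mono (Set.image_mono (Set.Ico_subset_Ico_right h))

theorem chainSpan_succ_le_comap (hΨ : ∀ r ≥ 1, N (Ψ (r + 1)) = Ψ r) (hΨ1 : N (Ψ 1) = 0)
    (k : ℕ) : chainSpan K Ψ (k + 1) ≤ (chainSpan K Ψ k).comap N := by
  rw [chainSpan, span_le]
  rintro _ ⟨r, ⟨hr1, hr2⟩, rfl⟩
  rcases r with _ | _ | r
  · omega
  · simp [hΨ1]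
  · rw [SetLike.mem_coe, mem_comap, hΨ (r + 1) (by omega)]
    exact mem_chainSpan (by omega) (by omega)

theorem chainSpan_le_map (hΨ : ∀ r ≥ 1, N (Ψ (r + 1)) = Ψ r) (k : ℕ) :
    chainSpan K Ψ k ≤ (chainSpan K Ψ (k + 1)).map N := by
  rw [chainSpan, span_le]
  rintro _ ⟨r, ⟨hr1, hr2⟩, rfl⟩
  exact ⟨Ψ (r + 1), mem_chainSpan (by omega) (by omega), hΨ r hr1⟩

theorem mem_chainSpan_succ_of_apply_mem (hΨ : ∀ r ≥ 1, N (Ψ (r + 1)) = Ψ r)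
    (hker : LinearMap.ker N ≤ K ∙ Ψ 1) {k : ℕ} (hk : 1 ≤ k) {x : V}
    (hx : N x ∈ chainSpan K Ψ k) : x ∈ chainSpan K Ψ (k + 1) := by
  obtain ⟨y, hy, hNy⟩ := chainSpan_le_map hΨ k hx
  have hxy : x - y ∈ K ∙ Ψ 1 := hker (by rw [LinearMap.mem_ker, map_sub, hNy, sub_self])
  have hΨ1 : K ∙ Ψ 1 ≤ chainSpan K Ψ (k + 1) :=
    (span_singleton_le_iff_mem _ _).2 (mem_chainSpan le_rfl (by omega))
  simpa using add_mem (hΨ1 hxy) hy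

variable {D : Module.End K V}

theorem apply_add_smul_mem_chainSpan (hΨ : ∀ r ≥ 1, N (Ψ (r + 1)) = Ψ r) (hΨ1 : N (Ψ 1) = 0)
    (hker : LinearMap.ker N ≤ K ∙ Ψ 1) (hDN : D * N - N * D = 1) {s : ℕ} (hs : 1 ≤ s) :
    D (Ψ s) + (s : K) • Ψ (s + 1) ∈ chainSpan K Ψ (s + 1) := by
  have hND (y : V) : N (D y) = D (N y) - y := by
    have := congr($hDN y)
    simp only [LinearMap.sub_apply, Module.End.mul_apply, Module.End.one_apply] at this
    rw [← sub_sub_cancel (D (N y)) (N (D y)), this]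
  induction s, hs using Nat.le_induction with
  | base =>
    refine mem_chainSpan_succ_of_apply_mem hΨ hker le_rfl ?_
    simp [hND, hΨ1, hΨ 1 le_rfl]
  | succ s hs ih =>
    refine mem_chainSpan_succ_of_apply_mem hΨ hker (by omega) ?_
    rw [map_add, map_smul, hND, hΨ s hs, hΨ (s + 1) (by omega)]
    convert ih using 1
    push_cast
    module

theorem chainSpan_le_comap_succ (hΨ : ∀ r ≥ 1, N (Ψ (r + 1)) = Ψ r) (hΨ1 : N (Ψ 1) = 0)
    (hker : LinearMap.ker N ≤ K ∙ Ψ 1) (hDN : D * N - N * D = 1) (k : ℕ) :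
    chainSpan K Ψ k ≤ (chainSpan K Ψ (k + 1)).comap D := by
  rw [chainSpan, span_le]
  rintro _ ⟨r, ⟨hr1, hr2⟩, rfl⟩
  rw [SetLike.mem_coe, mem_comap, ← add_sub_cancel_right (D (Ψ r)) ((r : K) • Ψ (r + 1))]
  exact sub_mem (chainSpan_mono (by omega) (apply_add_smul_mem_chainSpan hΨ hΨ1 hker hDN hr1))
    (smul_mem _ _ (mem_chainSpan (by omega) (by omega)))

theorem pow_apply_sub_smul_mem_chainSpan (hΨ : ∀ r ≥ 1, N (Ψ (r + 1)) = Ψ r)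
    (hΨ1 : N (Ψ 1) = 0) (hker : LinearMap.ker N ≤ K ∙ Ψ 1) (hDN : D * N - N * D = 1)
    {s : ℕ} (hs : 1 ≤ s) (j : ℕ) :
    (D ^ j) (Ψ s) - ((-1) ^ j * ∏ i ∈ range j, ((s : K) + i)) • Ψ (s + j) ∈
      chainSpan K Ψ (s + j) := by
  induction j with
  | zero => simp
  | succ j ih =>
    set c := (-1) ^ j * ∏ i ∈ range j, ((s : K) + i)
    have hsplit : (D ^ (j + 1)) (Ψ s) - ((-1) ^ (j + 1) * ∏ i ∈ range (j + 1), ((s : K) + i)) •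
        Ψ (s + (j + 1)) = D ((D ^ j) (Ψ s) - c • Ψ (s + j)) +
          c • (D (Ψ (s + j)) + ((s + j : ℕ) : K) • Ψ (s + j + 1)) := by
      rw [pow_succ', Module.End.mul_apply, map_sub, map_smul, prod_range_succ]
      push_cast
      module
    rw [hsplit]
    exact add_mem (chainSpan_le_comap_succ hΨ hΨ1 hker hDN _ ih)
      (smul_mem _ _ (apply_add_smul_mem_chainSpan hΨ hΨ1 hker hDN (s := s + j) (by omega)))

end chainSpan

section polynomial

variable {K V : Type*} [CommRing K] [AddCommGroup V] [Module K V] {Ψ : ℕ → V}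
  {M D : Module.End K V} {α : K}

theorem chainSpan_le_comap (hΨ : ∀ r ≥ 1, (M - α • 1) (Ψ (r + 1)) = Ψ r)
    (hΨ1 : (M - α • 1) (Ψ 1) = 0) (k : ℕ) : chainSpan K Ψ k ≤ (chainSpan K Ψ k).comap M := by
  intro x hx
  have hNx := chainSpan_succ_le_comap hΨ hΨ1 k (chainSpan_mono k.le_succ hx)
  rw [mem_comap, ← sub_add_cancel (M x) (α • x)]
  exact add_mem hNx (smul_mem _ _ hx)

theorem aeval_apply_sub_eval_smul_mem_chainSpan (hΨ : ∀ r ≥ 1, (M - α • 1) (Ψ (r + 1)) = Ψ r)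
    (hΨ1 : (M - α • 1) (Ψ 1) = 0) {s : ℕ} (hs : 1 ≤ s) (p : K[X]) :
    aeval M p (Ψ s) - p.eval α • Ψ s ∈ chainSpan K Ψ s := by
  obtain ⟨q, hq⟩ := X_sub_C_dvd_sub_C_eval (a := α) (p := p)
  have hfactor : aeval M p (Ψ s) - p.eval α • Ψ s = (M - α • 1) (aeval M q (Ψ s)) := by
    simpa [Algebra.algebraMap_eq_smul_one] using congr(aeval M $hq (Ψ s))
  rw [hfactor]
  exact chainSpan_succ_le_comap hΨ hΨ1 s <| aeval_apply_smul_mem_of_le_comap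
    (mem_chainSpan hs s.lt_succ_self) q M (chainSpan_le_comap hΨ hΨ1 _)

theorem sum_aeval_mul_pow_apply_sub_smul_mem_chainSpan
    (hΨ : ∀ r ≥ 1, (M - α • 1) (Ψ (r + 1)) = Ψ r) (hΨ1 : (M - α • 1) (Ψ 1) = 0)
    (hker : LinearMap.ker (M - α • 1) ≤ K ∙ Ψ 1) (hDM : D * M - M * D = 1)
    (m : ℕ) (p : ℕ → K[X]) {s : ℕ} (hs : 1 ≤ s) :
    (∑ j ∈ range (m + 1), aeval M (p j) * D ^ j) (Ψ s) -
        ((-1) ^ m * (∏ i ∈ range m, ((s : K) + i)) * (p m).eval α) • Ψ (s + m) ∈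
      chainSpan K Ψ (s + m) := by
  have hDN : D * (M - α • 1) - (M - α • 1) * D = 1 := by
    rw [mul_sub, sub_mul, mul_smul_comm, smul_mul_assoc, mul_one, one_mul,
      sub_sub_sub_cancel_right, hDM]
  have hMinv := chainSpan_le_comap hΨ hΨ1 (s + m)
  have hpow := pow_apply_sub_smul_mem_chainSpan hΨ hΨ1 hker hDN hs
  set c := (-1) ^ m * ∏ i ∈ range m, ((s : K) + i)
  have hlower : ∀ j < m, (D ^ j) (Ψ s) ∈ chainSpan K Ψ (s + m) := fun j hj => by
    rw [← sub_add_cancel ((D ^ j) (Ψ s)) _]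
    exact add_mem (chainSpan_mono (by omega) (hpow j))
      (smul_mem _ _ (mem_chainSpan (by omega) (by omega)))
  have hleading : aeval M (p m) ((D ^ m) (Ψ s)) - (c * (p m).eval α) • Ψ (s + m) =
      aeval M (p m) ((D ^ m) (Ψ s) - c • Ψ (s + m)) +
        c • (aeval M (p m) (Ψ (s + m)) - (p m).eval α • Ψ (s + m)) := by
    rw [map_sub, map_smul]
    module
  rw [sum_range_succ, LinearMap.add_apply, add_sub_assoc, LinearMap.sum_apply]
  refine add_mem (sum_mem fun j hj => ?_) ?_
  · exact aeval_apply_smul_mem_of_le_comap (hlower j (mem_range.1 hj)) _ _ hMinv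
  · rw [Module.End.mul_apply, hleading]
    exact add_mem (aeval_apply_smul_mem_of_le_comap (hpow m) _ _ hMinv)
      (smul_mem _ _ (aeval_apply_sub_eval_smul_mem_chainSpan hΨ hΨ1 (by omega) _))

end polynomial

section LaurentSeries

variable {K : Type*} [Field K]

theorem Mop_apply (a : ℤ → K) (n : ℤ) : Mop K a n = a (n - 1) := rfl

theorem Dq_one_apply (a : ℤ → K) (n : ℤ) : Dq K 1 a n = ((n : K) + 1) * a (n + 1) := by
  simp [Dq, qInt]

theorem Dq_one_mul_Mop_sub_Mop_mul_Dq_one : Dq K 1 * Mop K - Mop K * Dq K 1 = 1 := by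
  ext a n
  simp only [LinearMap.sub_apply, Module.End.mul_apply, Module.End.one_apply, Pi.sub_apply,
    Dq_one_apply, Mop_apply, add_sub_cancel_right, sub_add_cancel]
  push_cast
  ring

theorem Mop_sub_smul_apply (α : K) (a : ℤ → K) (n : ℤ) :
    (Mop K - α • 1) a n = a (n - 1) - α * a n := rfl

theorem Mop_sub_smul_Psi1 {α : K} (hα : α ≠ 0) : (Mop K - α • 1) (Psi1 K α) = 0 := by
  ext n
  simp only [Mop_sub_smul_apply, Psi1, Pi.zero_apply]
  rw [show -(n - 1) = -n + 1 by ring, zpow_add_one₀ hα, mul_comm, sub_self]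

theorem ker_Mop_sub_smul_le {α : K} (hα : α ≠ 0) :
    LinearMap.ker (Mop K - α • 1) ≤ K ∙ Psi1 K α := by
  intro x hx
  have hrec (n : ℤ) : x (n - 1) = α * x n := sub_eq_zero.1 (congr_fun hx n)
  have hper : Function.Periodic (fun n : ℤ => α ^ n * x n) 1 := fun n => by
    simp only [zpow_add_one₀ hα, mul_assoc, ← hrec (n + 1), add_sub_cancel_right]
  refine mem_span_singleton.2 ⟨x 0, funext fun n => ?_⟩
  have hn : α ^ n * x n = x 0 := by simpa using hper.int_mul_eq n
  rw [Pi.smul_apply, Psi1, smul_eq_mul, ← hn, zpow_neg, mul_right_comm,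
    mul_inv_cancel₀ (zpow_ne_zero n hα), one_mul]

theorem IsJordanChain.Mop_sub_smul_apply_succ {α : K} {Ψ : ℕ → ℤ → K}
    (hΨ : IsJordanChain K α Ψ) (r : ℕ) (hr : r ≥ 1) : (Mop K - α • 1) (Ψ (r + 1)) = Ψ r :=
  hΨ.2 (r + 1) (by omega)

end LaurentSeries

theorem P_Psi_s_q_eq_one_general (K : Type*) [Field K]
    (m : ℕ) (p : ℕ → K[X])
    (α : K) (hα : α ≠ 0) (s : ℕ) (hs : 1 ≤ s)
    (Ψ : ℕ → ℤ → K) (hΨ : IsJordanChain K α Ψ) :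
    (∑ j ∈ Finset.range (m + 1), aeval (Mop K) (p j) * Dq K 1 ^ j) (Ψ s) -
        ((-1) ^ m * (∏ i ∈ Finset.range m, ((s : K) + (i : K))) * (p m).eval α) • Ψ (s + m) ∈
      Submodule.span K (Ψ '' {r : ℕ | 1 ≤ r ∧ r < s + m}) :=
  sum_aeval_mul_pow_apply_sub_smul_mem_chainSpan hΨ.Mop_sub_smul_apply_succ
    (hΨ.1 ▸ Mop_sub_smul_Psi1 hα) (hΨ.1 ▸ ker_Mop_sub_smul_le hα)
    Dq_one_mul_Mop_sub_Mop_mul_Dq_one m p hs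

/-- for `q = 1` and `P = Σ_{j=0}^m p_j(M) D_1^j` with `p_m ≠ 0`,
`P Ψ_{α,s} − (−1)^m s(s+1)⋯(s+m−1) p_m(α) Ψ_{α,s+m}` lies in the span of
`{Ψ_{α,r} : 1 ≤ r < s+m}`. -/
theorem P_Psi_s_q_eq_one (K : Type*) [Field K]
    (hqi : ∀ n : ℤ, n ≠ 0 → qInt K (1 : K) n ≠ 0)
    (m : ℕ) (p : ℕ → K[X]) (hpm : p m ≠ 0)
    (α : K) (hα : α ≠ 0) (s : ℕ) (hs : 1 ≤ s)
    (Ψ : ℕ → ℤ → K) (hΨ : IsJordanChain K α Ψ) :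
    (∑ j ∈ Finset.range (m + 1), aeval (Mop K) (p j) * Dq K 1 ^ j) (Ψ s) -
        ((-1) ^ m * (∏ i ∈ Finset.range m, ((s : K) + (i : K))) * (p m).eval α) • Ψ (s + m) ∈
      Submodule.span K (Ψ '' {r : ℕ | 1 ≤ r ∧ r < s + m}) :=
  P_Psi_s_q_eq_one_general K m p α hα s hs Ψ hΨ
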